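/- arXiv:1510.00611 — 2 statements merged into one kernel-verified Lean document; each statement's English description precedes it below -/
import Mathlib

section
/- Fix an integer n ≥ 2 and let V : [0,∞) → ℝ^{n-1} be continuous. If (Z, η) is a solution of the Skorohod-type problem with data V and U := Z + V, then for every T > 0, sup_{0 ≤ t ≤ T, 1 ≤ k ≤ n-1} |U_k(t)| ≤ 2·sup_{0 ≤ t ≤ T, 1 ≤ k ≤ n-1} |V_k(t)|. -/
/-!
Since `U = Z + V ≥ 0`, it suffices to show `Z_k ≤ S := sup |V|` on `[0, T]`. Otherwise let `t₀`
be the first time at which some coordinate `Z_k` attains the maximum `M > S` of `Z` over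
`[0, T]`. There `Z_k + V_k ≥ M - S > 0`, so by complementarity `η_k` is idle on a left
neighbourhood `[a, t₀]`, where `Z_k' = n² (AⁿZ)_k ≤ 2n² (M - Z_k)`: the off-diagonal entries of
`Aⁿ` are nonnegative with sum at most `2`, and `M ≥ Z(0) = 0`. Backward Grönwall applied to
`M - Z_k` gives `Z_k(a) ≥ M`, contradicting the minimality of `t₀`.
-/

open MeasureTheory

open MeasureTheory

/-- The `(n-1) × (n-1)` tridiagonal matrix `Aⁿ` with `-2` on the diagonal and
`1` on the sub/super-diagonals. -/
def An (n : ℕ) : Matrix (Fin (n-1)) (Fin (n-1)) ℝ :=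
  Matrix.of fun k i => if k = i then -2 else if |(k : ℤ) - (i : ℤ)| = 1 then 1 else 0

/-- `(Z, η)` is a solution of the Skorohod-type problem
`dZ(t) = n²AⁿZ(t)dt + dη(t)`, `Z(t) ≥ -V(t)`, `∫₀ᵗ ⟨Z+V, dη⟩ = 0` with data `V`:
`Z` is continuous with `Z_i(t) ≥ -V_i(t)`; each `η_i` is a continuous nondecreasing
(Stieltjes) function with `η_i(0) = 0`; `Z(t) = ∫₀ᵗ n²AⁿZ(s) ds + η(t)`; and
`Σ_i ∫_{[0,t]} (Z_i(s) + V_i(s)) dη_i(s) = 0` (Lebesgue–Stieltjes integrals). -/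
def IsSkorohodSolution (n : ℕ) (V : ℝ → Fin (n-1) → ℝ)
    (Z : ℝ → Fin (n-1) → ℝ) (η : Fin (n-1) → StieltjesFunction ℝ) : Prop :=
  ContinuousOn Z (Set.Ici 0) ∧
  (∀ t ≥ (0:ℝ), ∀ i, Z t i ≥ -V t i) ∧
  (∀ i, Continuous (η i)) ∧
  (∀ i, η i 0 = 0) ∧
  (∀ t ≥ (0:ℝ), ∀ i,
    Z t i = (∫ s in (0:ℝ)..t, (n : ℝ)^2 * (An n).mulVec (Z s) i) + η i t) ∧
  (∀ t ≥ (0:ℝ),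
    ∑ i, ∫ s in Set.Icc (0:ℝ) t, (Z s i + V s i) ∂((η i).measure) = 0)

open Set Filter Topology

section TridiagonalMatrix

variable {n : ℕ}

lemma An_apply_self (k : Fin (n-1)) : An n k k = -2 := by
  simp [An]

lemma An_apply_of_ne {k j : Fin (n-1)} (hkj : k ≠ j) :
    An n k j = if |(k : ℤ) - (j : ℤ)| = 1 then 1 else 0 := by
  simp [An, hkj]

lemma An_apply_nonneg_of_ne {k j : Fin (n-1)} (hkj : k ≠ j) : 0 ≤ An n k j := by
  rw [An_apply_of_ne hkj]
  split_ifs <;> norm_num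

lemma sum_erase_An_le_two (k : Fin (n-1)) : ∑ j ∈ Finset.univ.erase k, An n k j ≤ 2 := by
  classical
  have hneighbours : ((Finset.univ.erase k).filter
      fun j : Fin (n-1) => |(k : ℤ) - (j : ℤ)| = 1).card ≤ 2 := by
    refine (Finset.card_le_card_of_injOn (fun j : Fin (n-1) => (j : ℤ))
      (t := {(k : ℤ) - 1, (k : ℤ) + 1}) ?_ ?_).trans (Finset.card_le_two)
    · intro j hj
      have hkj := (Finset.mem_filter.mp hj).2
      simp only [Finset.coe_insert, Finset.coe_singleton, mem_insert_iff, mem_singleton_iff]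
      rcases abs_eq zero_le_one |>.mp hkj with h | h <;> omega
    · intro i _ j _ hij
      exact Fin.ext (by simpa using hij)
  rw [Finset.sum_congr rfl fun j hj => An_apply_of_ne (Finset.ne_of_mem_erase hj).symm,
    Finset.sum_boole]
  exact_mod_cast hneighbours

lemma An_mulVec_le {z : Fin (n-1) → ℝ} {M : ℝ} (hM : 0 ≤ M) (hz : ∀ j, z j ≤ M)
    (k : Fin (n-1)) : (An n).mulVec z k ≤ 2 * (M - z k) := by
  have hoff : ∑ j ∈ Finset.univ.erase k, An n k j * z j ≤ 2 * M :=
    calc ∑ j ∈ Finset.univ.erase k, An n k j * z j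
        ≤ ∑ j ∈ Finset.univ.erase k, An n k j * M := Finset.sum_le_sum fun j hj =>
          mul_le_mul_of_nonneg_left (hz j) (An_apply_nonneg_of_ne (Finset.ne_of_mem_erase hj).symm)
      _ = (∑ j ∈ Finset.univ.erase k, An n k j) * M := (Finset.sum_mul ..).symm
      _ ≤ 2 * M := mul_le_mul_of_nonneg_right (sum_erase_An_le_two k) hM
  rw [show (An n).mulVec z k = ∑ j, An n k j * z j from rfl, ← Finset.add_sum_erase _ _ (Finset.mem_univ k), An_apply_self]
  linarith

end TridiagonalMatrix

lemma bddAbove_abs_apply_of_continuousOn {ι : Type*} [Fintype ι] {V : ℝ → ι → ℝ} {K : Set ℝ}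
    (hK : IsCompact K) (hV : ContinuousOn V K) :
    BddAbove {v : ℝ | ∃ s ∈ K, ∃ j, v = |V s j|} := by
  obtain ⟨B, hB⟩ := hK.bddAbove_image hV.norm
  refine ⟨B, ?_⟩
  rintro _ ⟨s, hs, j, rfl⟩
  exact (norm_le_pi_norm (V s) j).trans (hB ⟨s, hs, rfl⟩)

lemma exists_forall_apply_le_of_continuousOn {X ι : Type*} [TopologicalSpace X] [Finite ι]
    [Nonempty ι] {f : X → ι → ℝ} {K : Set X} (hK : IsCompact K) (hne : K.Nonempty)
    (hf : ContinuousOn f K) : ∃ x ∈ K, ∃ i, ∀ y ∈ K, ∀ j, f y j ≤ f x i := by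
  choose x hxK hxmax using fun i => hK.exists_isMaxOn hne ((continuous_apply i).comp_continuousOn hf)
  obtain ⟨i, hi⟩ := Finite.exists_max fun i => f (x i) i
  exact ⟨x i, hxK i, i, fun y hy j => (hxmax j hy).trans (hi j)⟩

lemma MeasureTheory.measure_eq_zero_of_setIntegral_eq_zero {X : Type*} [MeasurableSpace X]
    {μ : Measure X} {f : X → ℝ} {s t : Set X} (hs : MeasurableSet s) (hf : ∀ x ∈ s, 0 ≤ f x)
    (hfi : IntegrableOn f s μ) (hint : ∫ x in s, f x ∂μ = 0) (hts : t ⊆ s)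
    (hpos : ∀ x ∈ t, 0 < f x) : μ t = 0 := by
  have hzero : f =ᵐ[μ.restrict s] 0 :=
    (setIntegral_eq_zero_iff_of_nonneg_ae ((ae_restrict_iff' hs).2 (ae_of_all _ hf)) hfi).1 hint
  rw [Filter.EventuallyEq, ae_iff, Measure.restrict_apply' hs] at hzero
  exact measure_mono_null (fun x hx => show x ∈ {x | f x ≠ 0} ∩ s from ⟨(hpos x hx).ne', hts hx⟩) hzero

lemma StieltjesFunction.eq_of_measure_Ioc_eq_zero (f : StieltjesFunction ℝ) {a b : ℝ}
    (hab : a ≤ b) (h : f.measure (Ioc a b) = 0) : f a = f b := by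
  rw [StieltjesFunction.measure_Ioc, ENNReal.ofReal_eq_zero, sub_nonpos] at h
  exact le_antisymm (f.mono hab) h

/-- Backward Grönwall inequality: `w x * exp (c * x)` is monotone on `[a, b]`. -/
lemma nonpos_of_hasDerivAt_ge_neg_mul {w w' : ℝ → ℝ} {a b c : ℝ} (hab : a ≤ b)
    (hw : ContinuousOn w (Icc a b)) (hder : ∀ x ∈ Ioo a b, HasDerivAt w (w' x) x)
    (hbound : ∀ x ∈ Ioo a b, -(c * w x) ≤ w' x) (hb : w b ≤ 0) : w a ≤ 0 := by
  have hexp : ∀ x, HasDerivAt (fun x => Real.exp (c * x)) (Real.exp (c * x) * c) x := fun x => by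
    simpa using ((hasDerivAt_id x).const_mul c).exp
  have hmono : MonotoneOn (fun x => w x * Real.exp (c * x)) (Icc a b) := by
    refine monotoneOn_of_hasDerivWithinAt_nonneg (convex_Icc a b)
      (hw.mul (Real.continuous_exp.comp (continuous_const_mul c)).continuousOn) (fun x hx => ?_)
      (fun x hx => ?_) (f' := fun x => w' x * Real.exp (c * x) + w x * (Real.exp (c * x) * c))
    · rw [interior_Icc] at hx
      exact ((hder x hx).mul (hexp x)).hasDerivWithinAt
    · rw [interior_Icc] at hx
      have := hbound x hx
      have := Real.exp_pos (c * x)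
      nlinarith
  have := hmono (left_mem_Icc.2 hab) (right_mem_Icc.2 hab) hab
  have := mul_nonpos_of_nonpos_of_nonneg hb (Real.exp_pos (c * b)).le
  exact nonpos_of_mul_nonpos_left (by linarith) (Real.exp_pos (c * a))

namespace IsSkorohodSolution

variable {n : ℕ} {V Z : ℝ → Fin (n-1) → ℝ} {η : Fin (n-1) → StieltjesFunction ℝ}

lemma apply_zero (h : IsSkorohodSolution n V Z η) (i : Fin (n-1)) : Z 0 i = 0 := by
  obtain ⟨-, -, -, hη₀, hZ, -⟩ := h
  simpa [hη₀ i] using hZ 0 le_rfl i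

lemma setIntegral_eq_zero (h : IsSkorohodSolution n V Z η) {t : ℝ} (ht : 0 ≤ t)
    (i : Fin (n-1)) : ∫ s in Icc 0 t, (Z s i + V s i) ∂(η i).measure = 0 := by
  obtain ⟨-, hZV, -, -, -, hcompl⟩ := h
  refine (Finset.sum_eq_zero_iff_of_nonneg fun j _ => ?_).1 (hcompl t ht) i (Finset.mem_univ i)
  exact setIntegral_nonneg measurableSet_Icc fun s hs => by linarith [hZV s hs.1 j]

lemma eta_eq_of_pos (h : IsSkorohodSolution n V Z η) (hV : ContinuousOn V (Ici 0))
    {k : Fin (n-1)} {a b : ℝ} (ha : 0 ≤ a) (hpos : ∀ s ∈ Icc a b, 0 < Z s k + V s k) {s : ℝ}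
    (hs : s ∈ Icc a b) : η k s = η k b := by
  have hcont : ContinuousOn (fun s => Z s k + V s k) (Icc 0 b) :=
    ((continuousOn_pi.1 h.1 k).add (continuousOn_pi.1 hV k)).mono Icc_subset_Ici_self
  have hnull : (η k).measure (Icc a b) = 0 :=
    measure_eq_zero_of_setIntegral_eq_zero measurableSet_Icc
      (fun x hx => by linarith [h.2.1 x hx.1 k]) (hcont.integrableOn_compact isCompact_Icc)
      (h.setIntegral_eq_zero (ha.trans (hs.1.trans hs.2)) k) (Icc_subset_Icc_left ha) hpos
  exact (η k).eq_of_measure_Ioc_eq_zero hs.2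
    (measure_mono_null (Ioc_subset_Icc_self.trans (Icc_subset_Icc_left hs.1)) hnull)

lemma hasDerivAt_of_eta_eq (h : IsSkorohodSolution n V Z η) {k : Fin (n-1)} {a b x : ℝ}
    (ha : 0 ≤ a) (hη : ∀ s ∈ Icc a b, η k s = η k b) (hx : x ∈ Ioo a b) :
    HasDerivAt (fun s => Z s k) ((n : ℝ)^2 * (An n).mulVec (Z x) k) x := by
  set g : ℝ → ℝ := fun s => (n : ℝ)^2 * (An n).mulVec (Z s) k
  have hg : ContinuousOn g (Ici 0) := continuousOn_const.mul
    (continuousOn_pi.1 ((continuous_const.matrix_mulVec continuous_id).comp_continuousOn h.1) k)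
  have hx₀ : 0 < x := ha.trans_lt hx.1
  have hI : HasDerivAt (fun u => ∫ s in (0 : ℝ)..u, g s) (g x) x :=
    intervalIntegral.integral_hasDerivAt_right
      ((hg.mono (uIcc_of_le hx₀.le ▸ Icc_subset_Ici_self)).intervalIntegrable)
      ((hg.mono Ioi_subset_Ici_self).stronglyMeasurableAtFilter isOpen_Ioi x hx₀)
      (hg.continuousAt (Ici_mem_nhds hx₀))
  refine (hI.add_const (η k b)).congr_of_eventuallyEq ?_
  filter_upwards [Ioo_mem_nhds hx.1 hx.2] with s hs
  rw [h.2.2.2.2.1 s (ha.trans hs.1.le) k, hη s (Ioo_subset_Icc_self hs)]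

lemma exists_lt_le_apply_of_forall_le (h : IsSkorohodSolution n V Z η)
    (hV : ContinuousOn V (Ici 0)) {M t₀ : ℝ} {k : Fin (n-1)} (hM : 0 ≤ M) (ht₀ : 0 < t₀)
    (hZM : ∀ s ∈ Icc 0 t₀, ∀ j, Z s j ≤ M) (hk : M ≤ Z t₀ k) (hpos : 0 < Z t₀ k + V t₀ k) :
    ∃ a ∈ Ico 0 t₀, M ≤ Z a k := by
  have hcont : ContinuousAt (fun s => Z s k + V s k) t₀ :=
    ((continuousOn_pi.1 h.1 k).add (continuousOn_pi.1 hV k)).continuousAt (Ici_mem_nhds ht₀)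
  obtain ⟨a, hat₀, hslack⟩ := mem_nhdsLE_iff_exists_Icc_subset.1 <| nhdsWithin_le_nhds <|
    (hcont.eventually (lt_mem_nhds hpos)).and (lt_mem_nhds ht₀)
  have ha : 0 < a := (hslack (left_mem_Icc.2 hat₀.le)).2
  have hη : ∀ s ∈ Icc a t₀, η k s = η k t₀ := fun s hs =>
    h.eta_eq_of_pos hV ha.le (fun s hs => (hslack hs).1) hs
  refine ⟨a, ⟨ha.le, hat₀⟩, sub_nonpos.1 ?_⟩
  refine nonpos_of_hasDerivAt_ge_neg_mul (w := fun s => M - Z s k) (c := 2 * (n : ℝ)^2) hat₀.le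
    (continuousOn_const.sub ((continuousOn_pi.1 h.1 k).mono fun s hs => ha.le.trans hs.1))
    (fun x hx => (h.hasDerivAt_of_eta_eq ha.le hη hx).const_sub M) (fun x hx => ?_)
    (sub_nonpos.2 hk)
  have hdrift := mul_le_mul_of_nonneg_left
    (An_mulVec_le hM (hZM x ⟨ha.le.trans hx.1.le, hx.2.le⟩) k) (sq_nonneg (n : ℝ))
  linarith

theorem apply_le (h : IsSkorohodSolution n V Z η) (hV : ContinuousOn V (Ici 0)) {T S : ℝ}
    (hS : 0 ≤ S) (hVS : ∀ s ∈ Icc 0 T, ∀ j, -S ≤ V s j) {t : ℝ} (ht : t ∈ Icc 0 T)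
    (k : Fin (n-1)) : Z t k ≤ S := by
  by_contra! hlt
  have : Nonempty (Fin (n-1)) := ⟨k⟩
  obtain ⟨t₁, ht₁, k₁, hmax⟩ := exists_forall_apply_le_of_continuousOn isCompact_Icc ⟨t, ht⟩
    (h.1.mono Icc_subset_Ici_self)
  set M := Z t₁ k₁
  have hSM : S < M := hlt.trans_le (hmax t ht k)
  -- the first time at which some coordinate reaches its maximum `M`
  set C := ⋃ j, Icc 0 T ∩ (fun s => Z s j) ⁻¹' Ici M
  have hC : IsClosed C := isClosed_iUnion_of_finite fun j =>
    ((continuousOn_pi.1 h.1 j).mono Icc_subset_Ici_self).preimage_isClosed_of_isClosed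
      isClosed_Icc isClosed_Ici
  have hCbdd : BddBelow C := ⟨0, fun s hs => (mem_iUnion.1 hs).elim fun _ hs => hs.1.1⟩
  obtain ⟨k₀, ht₀, hk₀⟩ := mem_iUnion.1 (hC.csInf_mem ⟨t₁, mem_iUnion.2 ⟨k₁, ht₁, le_refl M⟩⟩ hCbdd)
  set t₀ := sInf C
  replace hk₀ : M ≤ Z t₀ k₀ := hk₀
  have ht₀pos : 0 < t₀ := ht₀.1.lt_of_ne fun h₀ => by
    linarith [h.apply_zero k₀, h₀ ▸ hk₀]
  obtain ⟨a, ⟨ha, hat₀⟩, haM⟩ := h.exists_lt_le_apply_of_forall_le hV (hS.trans hSM.le) ht₀pos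
    (fun s hs j => hmax s ⟨hs.1, hs.2.trans ht₀.2⟩ j) hk₀ (by linarith [hVS _ ht₀ k₀])
  exact (csInf_le hCbdd (mem_iUnion.2 ⟨k₀, ⟨ha, hat₀.le.trans ht₀.2⟩, haM⟩)).not_gt hat₀

end IsSkorohodSolution

theorem skorohod_sup_bound_general (n : ℕ)
    (V : ℝ → Fin (n-1) → ℝ) (hV : ContinuousOn V (Set.Ici 0))
    (Z : ℝ → Fin (n-1) → ℝ) (η : Fin (n-1) → StieltjesFunction ℝ)
    (h : IsSkorohodSolution n V Z η)
    (U : ℝ → Fin (n-1) → ℝ) (hU : ∀ t k, U t k = Z t k + V t k)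
    (T : ℝ) (t : ℝ) (ht : t ∈ Set.Icc 0 T) (k : Fin (n-1)) :
    |U t k| ≤ 2 * sSup {v : ℝ | ∃ s ∈ Set.Icc (0:ℝ) T, ∃ j : Fin (n-1), v = |V s j|} := by
  set S := sSup {v : ℝ | ∃ s ∈ Set.Icc (0:ℝ) T, ∃ j : Fin (n-1), v = |V s j|}
  have hVS : ∀ s ∈ Icc 0 T, ∀ j, |V s j| ≤ S := fun s hs j =>
    le_csSup (bddAbove_abs_apply_of_continuousOn isCompact_Icc (hV.mono Icc_subset_Ici_self))
      ⟨s, hs, j, rfl⟩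
  have hZS : Z t k ≤ S := h.apply_le hV ((abs_nonneg _).trans (hVS t ht k))
    (fun s hs j => neg_le_of_abs_le (hVS s hs j)) ht k
  have hU₀ : 0 ≤ U t k := by linarith [hU t k, h.2.1 t ht.1 k]
  rw [abs_of_nonneg hU₀, hU]
  linarith [le_of_abs_le (hVS t ht k)]

/-- If `(Z, η)` solves the Skorohod-type problem with data `V` and `U := Z + V`, then
`sup_{0≤t≤T, 1≤k≤n-1} |U_k(t)| ≤ 2 sup_{0≤t≤T, 1≤k≤n-1} |V_k(t)|`. -/
theorem skorohod_sup_bound (n : ℕ) (hn : 2 ≤ n)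
    (V : ℝ → Fin (n-1) → ℝ) (hV : ContinuousOn V (Set.Ici 0))
    (Z : ℝ → Fin (n-1) → ℝ) (η : Fin (n-1) → StieltjesFunction ℝ)
    (h : IsSkorohodSolution n V Z η)
    (U : ℝ → Fin (n-1) → ℝ) (hU : ∀ t k, U t k = Z t k + V t k)
    (T : ℝ) (hT : 0 < T) (t : ℝ) (ht : t ∈ Set.Icc 0 T) (k : Fin (n-1)) :
    |U t k| ≤ 2 * sSup {v : ℝ | ∃ s ∈ Set.Icc (0:ℝ) T, ∃ j : Fin (n-1), v = |V s j|} :=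
  skorohod_sup_bound_general n V hV Z η h U hU T t ht k
end

section
/- Fix T > 0 and an integer n ≥ 2. Let V : [0,∞)×[0,1] → ℝ be continuous with continuous partial derivatives ∂V/∂t and ∂²V/∂x², with V(t,0) = V(t,1) = 0 and V(0,·) nonnegative. Let (Zⁿ, ηⁿ) be the solution of the Skorohod-type problem with data Vⁿ(t) := (V(t, 1/n), …, V(t, (n-1)/n)). Then each component ηⁿ_k is absolutely continuous on [0,T] with derivative η̇ⁿ_k ∈ L²([0,T]), and there exists a constant C, depending on T and on sup_{0 ≤ t ≤ T, 0 ≤ z ≤ 1} |∂²V(t,z)/∂z²| but not on n, such that ∫₀ᵀ Σ_{k=1}^{n-1} (η̇ⁿ_k(t))² dt ≤ C·( ∫₀ᵀ Σ_{k=1}^{n-1} (∂V/∂t(t, k/n))² dt + n ). -/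
open MeasureTheory

open MeasureTheory

open Set Filter Topology
open scoped NNReal Matrix

/-!
Fix `k` and write `W = Zₖ + Vₖ ≥ 0` and `G = n²(AⁿZ)ₖ + ∂ₜVₖ`. The Skorohod equation reads
`ηₖ(q) - ηₖ(p) = W(q) - W(p) - ∫ₚ^q G`, and `ηₖ` only increases on the contact set `{W = 0}`.
At a contact time `Zₖ = -Vₖ` while `Z ≥ -V`; since `Aⁿ` has nonnegative off-diagonal entries,
`n²(AⁿZ)ₖ ≥ -n²(AⁿV)ₖ`, and `n²(AⁿV)ₖ` is a second difference quotient of `V(t, ·)` (the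
boundary values `V(t, 0) = V(t, 1) = 0` supply the missing neighbours), bounded by
`sup |∂²V/∂x²|`. So `G ≥ -L` on the contact set, with `L = sup |∂²V/∂x²| + sup |∂V/∂t|`.
If `b` is the last contact time in `[p, q]`, then `ηₖ` is flat on `[b, q]` and
`ηₖ(b) - ηₖ(p) = -W(p) - ∫ₚᵇ G ≤ -∫ₚᵇ G`; by continuity of `G` this bounds the right Dini
derivative of `ηₖ` by `L`, so `ηₖ` is `L`-Lipschitz on `[0, T]`. A Lipschitz function is the
integral of its derivative, which is bounded by `L`, whence `∫₀ᵀ Σₖ (η̇ₖ)² ≤ T (n - 1) L²`.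
-/

theorem abs_second_difference_le {f f' f'' : ℝ → ℝ} {x h M : ℝ} (hh : 0 ≤ h)
    (hf : ∀ y, HasDerivAt f (f' y) y) (hf' : ∀ y, HasDerivAt f' (f'' y) y)
    (hM : ∀ y ∈ Icc (x - h) (x + h), |f'' y| ≤ M) :
    |f (x - h) - 2 * f x + f (x + h)| ≤ M * h ^ 2 := by
  have hf'_step : ∀ y ∈ Ico (x - h) x, ‖f' (y + h) - f' y‖ ≤ M * h := by
    intro y hy
    have := norm_image_sub_le_of_norm_deriv_le_segment' (f := f') (a := y) (b := y + h)
      (fun z _ => (hf' z).hasDerivWithinAt)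
      (fun z hz => hM z ⟨by linarith [hy.1, hz.1], by linarith [hy.2, hz.2]⟩)
      (y + h) (right_mem_Icc.2 (by linarith))
    rwa [add_sub_cancel_left] at this
  have hstep : ∀ y, HasDerivAt (fun y => f (y + h) - f y) (f' (y + h) - f' y) y := fun y =>
    ((hf (y + h)).comp_add_const y h).sub (hf y)
  have := norm_image_sub_le_of_norm_deriv_le_segment' (a := x - h) (b := x)
    (fun y _ => (hstep y).hasDerivWithinAt) hf'_step x (right_mem_Icc.2 (by linarith))
  rw [sub_sub_cancel, sub_add_cancel, Real.norm_eq_abs] at this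
  calc |f (x - h) - 2 * f x + f (x + h)| = |f (x + h) - f x - (f x - f (x - h))| := by
        congr 1; ring
    _ ≤ M * h * h := this
    _ = M * h ^ 2 := by ring

theorem Matrix.mulVec_apply_le_of_offDiag_nonneg {ι R : Type*} [Fintype ι] [Semiring R]
    [PartialOrder R] [IsOrderedRing R] {A : Matrix ι ι R} (hA : ∀ i j, i ≠ j → 0 ≤ A i j)
    {v w : ι → R} (hvw : v ≤ w) {k : ι} (hk : v k = w k) : (A *ᵥ v) k ≤ (A *ᵥ w) k := by
  refine Finset.sum_le_sum fun j _ => ?_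
  rcases eq_or_ne k j with rfl | hkj
  · rw [hk]
  · exact mul_le_mul_of_nonneg_left (hvw j) (hA k j hkj)

theorem An_apply {n : ℕ} (k j : Fin (n - 1)) :
    An n k j = if (j : ℕ) = k then -2 else if (j : ℕ) + 1 = k ∨ (j : ℕ) = k + 1 then 1 else 0 := by
  simp only [An, Matrix.of_apply, Fin.ext_iff, abs_eq (zero_le_one' ℤ)]
  split_ifs <;> first | rfl | omega

theorem An_mulVec_apply {n : ℕ} (u : ℕ → ℝ) (h0 : u 0 = 0) (hn : u n = 0) (k : Fin (n - 1)) :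
    (An n *ᵥ fun j => u (j + 1)) k = u k - 2 * u (k + 1) + u (k + 2) := by
  have hk := k.isLt
  have hentry : ∀ m : ℕ, (if m = k then -2 else if m + 1 = k ∨ m = k + 1 then 1 else 0) * u (m + 1)
      = (if m = k then -2 * u (m + 1) else 0) + (if m + 1 = k then u (m + 1) else 0)
        + (if m = k + 1 then u (m + 1) else 0) := by
    intro m
    split_ifs <;> first | omega | ring
  have hleft : ∑ m ∈ Finset.range (n - 1), (if m + 1 = k then u (m + 1) else 0) = u k := by
    rcases Nat.eq_zero_or_pos k with h | h
    · rw [h, h0]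
      exact Finset.sum_eq_zero fun m _ => if_neg m.succ_ne_zero
    · rw [Finset.sum_eq_single_of_mem ((k : ℕ) - 1) (Finset.mem_range.2 (by omega))
        fun m _ hm => if_neg (by omega), if_pos (by omega), Nat.sub_add_cancel h]
  have hright : ∑ m ∈ Finset.range (n - 1), (if m = k + 1 then u (m + 1) else 0) = u (k + 2) := by
    rw [Finset.sum_ite_eq']
    split_ifs with h
    · rfl
    · rw [show (k : ℕ) + 2 = n by rw [Finset.mem_range] at h; omega, hn]
  simp only [Matrix.mulVec, dotProduct, An_apply]
  rw [Fin.sum_univ_eq_sum_range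
    (fun m => (if m = k then -2 else if m + 1 = k ∨ m = k + 1 then 1 else 0) * u (m + 1))]
  simp only [hentry, Finset.sum_add_distrib, hleft, hright, Finset.sum_ite_eq', Finset.mem_range,
    if_pos hk]
  ring

theorem An_nonneg_of_ne {n : ℕ} {k j : Fin (n - 1)} (hkj : k ≠ j) : 0 ≤ An n k j := by
  rw [An_apply, if_neg fun h => hkj (Fin.ext h.symm)]
  split_ifs <;> norm_num

theorem abs_sq_mul_An_mulVec_grid_le {n : ℕ} {f f' f'' : ℝ → ℝ} {M : ℝ}
    (hf : ∀ y, HasDerivAt f (f' y) y) (hf' : ∀ y, HasDerivAt f' (f'' y) y)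
    (hM : ∀ y ∈ Icc (0:ℝ) 1, |f'' y| ≤ M) (h0 : f 0 = 0) (h1 : f 1 = 0) (k : Fin (n - 1)) :
    |(n : ℝ) ^ 2 * (An n *ᵥ fun j => f (((j : ℕ) + 1 : ℝ) / n)) k| ≤ M := by
  have hk : (k : ℕ) + 2 ≤ n := by omega
  have hn : (0 : ℝ) < n := by exact_mod_cast (show 0 < n by omega)
  have hgrid := An_mulVec_apply (fun m => f (m / n)) (by simp [h0]) (by simp [hn.ne', h1]) k
  push_cast at hgrid
  have hx : ((k : ℕ) : ℝ) / n = ((k : ℕ) + 1) / n - 1 / n := by ring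
  have hz : ((k : ℕ) + 2 : ℝ) / n = ((k : ℕ) + 1) / n + 1 / n := by ring
  rw [hgrid, hx, hz, abs_mul, abs_of_pos (by positivity)]
  have hbound := abs_second_difference_le (x := ((k : ℕ) + 1) / n) (h := 1 / n) (by positivity)
    hf hf' (M := M) fun y hy => hM y ⟨?_, ?_⟩
  · calc (n : ℝ) ^ 2 * |f (((k : ℕ) + 1) / n - 1 / n) - 2 * f (((k : ℕ) + 1) / n)
          + f (((k : ℕ) + 1) / n + 1 / n)| ≤ n ^ 2 * (M * (1 / n) ^ 2) := by gcongr
      _ = M := by field_simp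
  · calc (0 : ℝ) ≤ ((k : ℕ) : ℝ) / n := by positivity
      _ ≤ y := by rw [hx]; exact hy.1
  · calc y ≤ ((k : ℕ) + 2 : ℝ) / n := by rw [hz]; exact hy.2
      _ ≤ 1 := by rw [div_le_one hn]; exact_mod_cast hk

theorem grid_mem_Icc {n : ℕ} (k : Fin (n - 1)) : (((k : ℕ) + 1 : ℝ) / n) ∈ Icc (0 : ℝ) 1 := by
  have hk : (k : ℕ) + 1 ≤ n := by omega
  exact ⟨by positivity, div_le_one_of_le₀ (by exact_mod_cast hk) (Nat.cast_nonneg n)⟩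

section Reflection

variable {η : StieltjesFunction ℝ} {W G : ℝ → ℝ}

theorem StieltjesFunction.le_of_measure_Ioc_eq_zero {p q : ℝ} (h : η.measure (Ioc p q) = 0) :
    η q ≤ η p := by
  rw [StieltjesFunction.measure_Ioc, ENNReal.ofReal_eq_zero] at h
  linarith

theorem sub_le_mul_of_reflection {p q K : ℝ} (hK : 0 ≤ K) (hpq : p ≤ q)
    (hWc : ContinuousOn W (Icc p q)) (hW : ∀ u ∈ Icc p q, 0 ≤ W u)
    (hGc : ContinuousOn G (Icc p q))
    (hinc : ∀ b ∈ Icc p q, η b - η p = W b - W p - ∫ u in p..b, G u)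
    (hsupp : ∀ᵐ u ∂η.measure, u ∈ Icc p q → W u = 0)
    (hG : ∀ b ∈ Icc p q, W b = 0 → ∀ u ∈ Icc p b, -K ≤ G u) :
    η q - η p ≤ K * (q - p) := by
  have hconst : ∀ c ∈ Icc p q, (∀ u ∈ Ioc c q, W u ≠ 0) → η q ≤ η c := by
    intro c hc hW0
    refine StieltjesFunction.le_of_measure_Ioc_eq_zero (measure_mono_null (fun u hu => ?_)
      (ae_iff.1 hsupp))
    exact fun h => hW0 u hu (h ⟨hc.1.trans hu.1.le, hu.2⟩)
  set S := {u | u ∈ Icc p q ∧ W u = 0}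
  rcases S.eq_empty_or_nonempty with hS | hS
  · have := hconst p (left_mem_Icc.2 hpq) fun u hu hWu =>
      hS.subset (show u ∈ S from ⟨⟨hu.1.le, hu.2⟩, hWu⟩)
    nlinarith
  · have hSc : IsClosed S := hWc.preimage_isClosed_of_isClosed isClosed_Icc isClosed_singleton
    have hSbdd : BddAbove S := ⟨q, fun u hu => hu.1.2⟩
    set b := sSup S
    obtain ⟨hb, hWb⟩ : b ∈ S := hSc.csSup_mem hS hSbdd
    have hqb : η q ≤ η b := hconst b hb fun u hu hWu =>
      (not_le.2 hu.1) (le_csSup hSbdd ⟨⟨hb.1.trans hu.1.le, hu.2⟩, hWu⟩)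
    have hGint : -((b - p) * K) ≤ ∫ u in p..b, G u := by
      simpa using intervalIntegral.integral_mono_on hb.1 (intervalIntegrable_const (μ := volume))
        ((hGc.mono (Icc_subset_Icc_right hb.2)).intervalIntegrable_of_Icc hb.1) (hG b hb hWb)
    have hpb := hinc b hb
    rw [hWb] at hpb
    nlinarith [hW p (left_mem_Icc.2 hpq), hb.2]

theorem lipschitzOnWith_of_reflection {a b : ℝ} {L : ℝ≥0} (hη : ContinuousOn η (Icc a b))
    (hWc : ContinuousOn W (Icc a b)) (hW : ∀ u ∈ Icc a b, 0 ≤ W u)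
    (hGc : ContinuousOn G (Icc a b))
    (hinc : ∀ p ∈ Icc a b, ∀ q ∈ Icc a b, p ≤ q → η q - η p = W q - W p - ∫ u in p..q, G u)
    (hsupp : ∀ᵐ u ∂η.measure, u ∈ Icc a b → W u = 0)
    (hGL : ∀ u ∈ Icc a b, W u = 0 → -(L : ℝ) ≤ G u) :
    LipschitzOnWith L η (Icc a b) := by
  have hslope : ∀ x ∈ Ico a b, ∀ r, (L : ℝ) < r → ∀ᶠ z in 𝓝[>] x, slope η x z < r := by
    intro x hx r hr
    obtain ⟨ε, hε, hεr⟩ : ∃ ε > 0, (L : ℝ) + ε < r := ⟨(r - L) / 2, by linarith, by linarith⟩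
    obtain ⟨δ, hδ, hGδ⟩ := Metric.continuousWithinAt_iff.1 (hGc x (Ico_subset_Icc_self hx))
      (ε / 2) (half_pos hε)
    filter_upwards [Ioo_mem_nhdsGT (lt_min (lt_add_of_pos_right x hδ) hx.2)] with z hz
    have hxz : Icc x z ⊆ Icc a b := Icc_subset_Icc hx.1 (hz.2.le.trans (min_le_right _ _))
    have hGx : ∀ u ∈ Icc x z, |G u - G x| < ε / 2 := fun u hu =>
      hGδ (hxz hu) (by
        rw [Real.dist_eq, abs_of_nonneg (sub_nonneg.2 hu.1)]
        linarith [hu.2, hz.2.trans_le (min_le_left _ _)])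
    have hGu : ∀ c ∈ Icc x z, W c = 0 → ∀ u ∈ Icc x c, -((L : ℝ) + ε) ≤ G u := by
      intro c hc hWc u hu
      have h1 := abs_lt.1 (hGx c hc)
      have h2 := abs_lt.1 (hGx u ⟨hu.1, hu.2.trans hc.2⟩)
      linarith [hGL c (hxz hc) hWc]
    have hle := sub_le_mul_of_reflection (add_nonneg L.coe_nonneg hε.le) hz.1.le (hWc.mono hxz)
      (fun u hu => hW u (hxz hu)) (hGc.mono hxz)
      (fun q hq => hinc x (hxz (left_mem_Icc.2 hz.1.le)) q (hxz hq) hq.1)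
      (hsupp.mono fun u hu hu' => hu (hxz hu')) hGu
    rw [slope_def_field, div_lt_iff₀ (sub_pos.2 hz.1)]
    nlinarith [sub_pos.2 hz.1]
  refine LipschitzOnWith.of_le_add_mul L fun x hx y hy => ?_
  rcases le_total x y with hxy | hyx
  · linarith [η.mono hxy, mul_nonneg L.coe_nonneg (dist_nonneg : 0 ≤ dist x y)]
  · have := image_le_of_liminf_slope_right_le_deriv_boundary (f := η) (a := y) (b := b)
      (B := fun t => η y + L * (t - y)) (B' := fun _ => L) (hη.mono (Icc_subset_Icc_left hy.1))
      (by simp) (by fun_prop)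
      (fun t _ => by simpa using ((((hasDerivAt_id t).sub_const y).const_mul (L : ℝ)).const_add
        (η y)).hasDerivWithinAt)
      (fun t ht r hr => (hslope t ⟨hy.1.trans ht.1, ht.2⟩ r hr).frequently) ⟨hyx, hx.2⟩
    rwa [Real.dist_eq, abs_of_nonneg (sub_nonneg.2 hyx)]

end Reflection

namespace IsSkorohodSolution

variable {n : ℕ} {V Z : ℝ → Fin (n - 1) → ℝ} {η : Fin (n - 1) → StieltjesFunction ℝ}

theorem continuousOn_apply (hsol : IsSkorohodSolution n V Z η) (k : Fin (n - 1)) :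
    ContinuousOn (fun u => Z u k) (Ici 0) :=
  (continuous_apply k).comp_continuousOn hsol.1

theorem continuousOn_mulVec (hsol : IsSkorohodSolution n V Z η) (k : Fin (n - 1)) :
    ContinuousOn (fun u => (An n *ᵥ Z u) k) (Ici 0) := by
  have := hsol.1
  fun_prop

theorem add_nonneg (hsol : IsSkorohodSolution n V Z η) {u : ℝ} (hu : 0 ≤ u) (k : Fin (n - 1)) :
    0 ≤ Z u k + V u k := by
  linarith [hsol.2.1 u hu k]

theorem intervalIntegrable_mulVec (hsol : IsSkorohodSolution n V Z η) (k : Fin (n - 1)) {p q : ℝ}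
    (hp : 0 ≤ p) (hq : 0 ≤ q) :
    IntervalIntegrable (fun s => (n : ℝ) ^ 2 * (An n *ᵥ Z s) k) volume p q :=
  ((continuousOn_const.mul (hsol.continuousOn_mulVec k)).mono
    fun _ hs => (le_inf hp hq).trans hs.1).intervalIntegrable

theorem sub_eq (hsol : IsSkorohodSolution n V Z η) (k : Fin (n - 1)) {p q : ℝ} (hp : 0 ≤ p)
    (hq : 0 ≤ q) :
    η k q - η k p = Z q k - Z p k - ∫ s in p..q, (n : ℝ) ^ 2 * (An n *ᵥ Z s) k := by
  rw [hsol.2.2.2.2.1 p hp k, hsol.2.2.2.2.1 q hq k,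
    ← intervalIntegral.integral_interval_sub_left (hsol.intervalIntegrable_mulVec k le_rfl hq)
      (hsol.intervalIntegrable_mulVec k le_rfl hp)]
  ring

theorem ae_contact (hsol : IsSkorohodSolution n V Z η) {T : ℝ} (hT : 0 ≤ T)
    (hV : ∀ i, ContinuousOn (fun t => V t i) (Icc 0 T)) (k : Fin (n - 1)) :
    ∀ᵐ u ∂(η k).measure, u ∈ Icc 0 T → Z u k + V u k = 0 := by
  have hnonneg : ∀ i, 0 ≤ᵐ[(η i).measure.restrict (Icc 0 T)] fun u => Z u i + V u i := fun i =>
    (ae_restrict_iff' measurableSet_Icc).2 (ae_of_all _ fun u hu => hsol.add_nonneg hu.1 i)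
  have hint : ∀ i, IntegrableOn (fun u => Z u i + V u i) (Icc 0 T) (η i).measure := fun i =>
    ((hsol.continuousOn_apply i).mono Icc_subset_Ici_self |>.add (hV i)).integrableOn_compact
      isCompact_Icc
  have hzero := (Finset.sum_eq_zero_iff_of_nonneg fun i _ => integral_nonneg_of_ae (hnonneg i)).1
    (hsol.2.2.2.2.2 T hT) k (Finset.mem_univ k)
  exact (ae_restrict_iff' measurableSet_Icc).1 ((integral_eq_zero_iff_of_nonneg_ae (hnonneg k)
    (hint k)).1 hzero)

theorem neg_mulVec_le_of_contact (hsol : IsSkorohodSolution n V Z η) {u : ℝ} (hu : 0 ≤ u)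
    {k : Fin (n - 1)} (hk : Z u k + V u k = 0) : -(An n *ᵥ V u) k ≤ (An n *ᵥ Z u) k := by
  rw [← Pi.neg_apply, ← Matrix.mulVec_neg]
  exact Matrix.mulVec_apply_le_of_offDiag_nonneg (fun _ _ => An_nonneg_of_ne)
    (fun i => by simpa using hsol.2.1 u hu i) (by simp; linarith)

theorem lipschitzOnWith (hsol : IsSkorohodSolution n V Z η) {V' : ℝ → Fin (n - 1) → ℝ} {T : ℝ}
    {L : ℝ≥0} (hT : 0 ≤ T) (hV : ∀ t i, HasDerivAt (fun s => V s i) (V' t i) t)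
    (hV' : ∀ i, ContinuousOn (fun t => V' t i) (Icc 0 T))
    (hL : ∀ t ∈ Icc 0 T, ∀ k, (n : ℝ) ^ 2 * (An n *ᵥ V t) k - V' t k ≤ L) (k : Fin (n - 1)) :
    LipschitzOnWith L (η k) (Icc 0 T) := by
  have hVc : ∀ i, ContinuousOn (fun t => V t i) (Icc 0 T) := fun i =>
    fun t _ => (hV t i).continuousAt.continuousWithinAt
  refine lipschitzOnWith_of_reflection (W := fun u => Z u k + V u k)
    (G := fun u => (n : ℝ) ^ 2 * (An n *ᵥ Z u) k + V' u k) (hsol.2.2.1 k).continuousOn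
    (((hsol.continuousOn_apply k).mono Icc_subset_Ici_self).add (hVc k))
    (fun u hu => hsol.add_nonneg hu.1 k)
    ((continuousOn_const.mul ((hsol.continuousOn_mulVec k).mono Icc_subset_Ici_self)).add (hV' k))
    (fun p hp q hq hpq => ?_) (hsol.ae_contact hT hVc k) (fun u hu hc => ?_)
  · have hVint : ∫ s in p..q, V' s k = V q k - V p k :=
      intervalIntegral.integral_eq_sub_of_hasDerivAt (fun s _ => hV s k)
        ((hV' k).mono (uIcc_subset_Icc hp hq)).intervalIntegrable
    rw [intervalIntegral.integral_add (hsol.intervalIntegrable_mulVec k hp.1 hq.1)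
      ((hV' k).mono (uIcc_subset_Icc hp hq)).intervalIntegrable, hVint, hsol.sub_eq k hp.1 hq.1]
    ring
  · have := hsol.neg_mulVec_le_of_contact hu.1 hc
    nlinarith [hL u hu k]

end IsSkorohodSolution

theorem LipschitzOnWith.exists_bounded_density {f : ℝ → ℝ} {a b : ℝ} {K : ℝ≥0} (hab : a ≤ b)
    (hf : LipschitzOnWith K f (Icc a b)) :
    ∃ g : ℝ → ℝ, Measurable g ∧ (∀ u, |g u| ≤ K) ∧ ∀ t ∈ Icc a b, f t = f a + ∫ u in a..t, g u := by
  have hF : LipschitzWith K fun t => f (projIcc a b hab t) := by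
    have h := hf.to_restrict.comp (LipschitzWith.projIcc hab)
    rwa [mul_one] at h
  refine ⟨deriv _, measurable_deriv _, fun u => norm_deriv_le_of_lipschitz hF, fun t ht => ?_⟩
  rw [(hF.lipschitzOnWith.absolutelyContinuousOnInterval).integral_deriv_eq_sub,
    projIcc_of_mem _ ht, projIcc_left]
  ring

theorem integrableOn_Icc_of_abs_le {f : ℝ → ℝ} {a b L : ℝ} (hf : Measurable f)
    (hfL : ∀ u, |f u| ≤ L) : IntegrableOn f (Icc a b) :=
  Measure.integrableOn_of_bounded measure_Icc_lt_top.ne hf.aestronglyMeasurable (ae_of_all _ hfL)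

theorem integral_sum_sq_le_of_abs_le {ι : Type*} [Fintype ι] {g : ι → ℝ → ℝ} {T L : ℝ}
    (hT : 0 ≤ T) (hg : ∀ i, Measurable (g i)) (hgL : ∀ i u, |g i u| ≤ L) :
    ∫ t in (0:ℝ)..T, ∑ i, (g i t) ^ 2 ≤ T * (Fintype.card ι * L ^ 2) := by
  have hsum : ∀ u, ∑ i, (g i u) ^ 2 ≤ Fintype.card ι * L ^ 2 := fun u => by
    simpa using Finset.sum_le_sum fun i (_ : i ∈ Finset.univ) => sq_le_sq' (abs_le.1 (hgL i u)).1
      (abs_le.1 (hgL i u)).2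
  have hint : IntervalIntegrable (fun t => ∑ i, (g i t) ^ 2) volume 0 T := by
    refine (intervalIntegrable_iff_integrableOn_Icc_of_le hT).2
      (integrableOn_Icc_of_abs_le (L := Fintype.card ι * L ^ 2) (by fun_prop) fun u => ?_)
    rw [abs_of_nonneg (by positivity)]
    exact hsum u
  calc ∫ t in (0:ℝ)..T, ∑ i, (g i t) ^ 2 ≤ ∫ _ in (0:ℝ)..T, (Fintype.card ι * L ^ 2) :=
        intervalIntegral.integral_mono_on hT hint intervalIntegrable_const fun u _ => hsum u
    _ = T * (Fintype.card ι * L ^ 2) := by simp; ring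

theorem eta_absolutely_continuous_L2_bound_general
    (T : ℝ) (hT : 0 < T) (V Vt Vx Vxx : ℝ → ℝ → ℝ)
    (hVt : ∀ t x, HasDerivAt (fun s => V s x) (Vt t x) t)
    (hVx : ∀ t x, HasDerivAt (fun y => V t y) (Vx t x) x)
    (hVxx : ∀ t x, HasDerivAt (fun y => Vx t y) (Vxx t x) x)
    (hVtc : Continuous fun p : ℝ × ℝ => Vt p.1 p.2)
    (hVxxc : Continuous fun p : ℝ × ℝ => Vxx p.1 p.2)
    (hVbd : ∀ t ≥ (0:ℝ), V t 0 = 0 ∧ V t 1 = 0) :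
    ∃ C : ℝ, ∀ n : ℕ, 2 ≤ n →
      ∀ (Zn : ℝ → Fin (n-1) → ℝ) (ηn : Fin (n-1) → StieltjesFunction ℝ),
        IsSkorohodSolution n (fun t k => V t (((k : ℕ) + 1 : ℝ) / n)) Zn ηn →
        ∃ g : Fin (n-1) → ℝ → ℝ,
          (∀ k, IntegrableOn (g k) (Set.Icc 0 T)) ∧
          (∀ k, IntegrableOn (fun t => (g k t)^2) (Set.Icc 0 T)) ∧
          (∀ k, ∀ t ∈ Set.Icc (0:ℝ) T, ηn k t = ∫ s in (0:ℝ)..t, g k s) ∧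
          (∫ t in (0:ℝ)..T, ∑ k, (g k t)^2)
            ≤ C * ((∫ t in (0:ℝ)..T, ∑ k : Fin (n-1), (Vt t (((k : ℕ) + 1 : ℝ) / n))^2) + n) := by
  have hbox : IsCompact (Icc 0 T ×ˢ Icc (0 : ℝ) 1) := isCompact_Icc.prod isCompact_Icc
  obtain ⟨M₁, hM₁⟩ := hbox.exists_bound_of_continuousOn hVxxc.continuousOn
  obtain ⟨M₂, hM₂⟩ := hbox.exists_bound_of_continuousOn hVtc.continuousOn
  set L := (M₁ + M₂).toNNReal
  refine ⟨T * L ^ 2, fun n _ Z η hsol => ?_⟩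
  have hlip (k : Fin (n - 1)) : LipschitzOnWith L (η k) (Icc 0 T) := by
    refine hsol.lipschitzOnWith hT.le (fun t i => hVt t _)
      (fun i => (hVtc.comp (continuous_id.prodMk continuous_const)).continuousOn)
      (fun t ht k => ?_) k
    have hAV := abs_sq_mul_An_mulVec_grid_le (hVx t) (hVxx t) (fun y hy => hM₁ (t, y) ⟨ht, hy⟩)
      (hVbd t ht.1).1 (hVbd t ht.1).2 k
    have hVt_le := hM₂ (t, _) ⟨ht, grid_mem_Icc k⟩
    linarith [abs_le.1 hAV, abs_le.1 hVt_le, Real.le_coe_toNNReal (M₁ + M₂)]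
  choose g hgm hgL hg using fun k => (hlip k).exists_bounded_density hT.le
  have hgL2 : ∀ k u, |g k u ^ 2| ≤ (L : ℝ) ^ 2 := fun k u => by
    rw [abs_pow]
    exact pow_le_pow_left₀ (abs_nonneg _) (hgL k u) 2
  refine ⟨g, fun k => integrableOn_Icc_of_abs_le (hgm k) (hgL k),
    fun k => integrableOn_Icc_of_abs_le ((hgm k).pow_const 2) (hgL2 k),
    fun k t ht => by simpa [hsol.2.2.2.1 k] using hg k t ht, ?_⟩
  have hI : 0 ≤ ∫ t in (0:ℝ)..T, ∑ k : Fin (n-1), (Vt t (((k : ℕ) + 1 : ℝ) / n)) ^ 2 :=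
    intervalIntegral.integral_nonneg hT.le fun _ _ => by positivity
  have hcard : ((Fintype.card (Fin (n - 1)) : ℕ) : ℝ) ≤ n := by simp
  calc ∫ t in (0:ℝ)..T, ∑ k, (g k t) ^ 2 ≤ T * (Fintype.card (Fin (n - 1)) * L ^ 2) :=
        integral_sum_sq_le_of_abs_le hT.le hgm hgL
    _ ≤ T * L ^ 2 * ((∫ t in (0:ℝ)..T, ∑ k : Fin (n-1), (Vt t (((k : ℕ) + 1 : ℝ) / n)) ^ 2)
          + n) := by
        nlinarith [mul_nonneg hT.le (sq_nonneg (L : ℝ))]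

/-- For smooth obstacle data `V`, the reflection terms `ηⁿ_k` of the Skorohod-type
problems with data `Vⁿ(t) = (V(t,1/n), …, V(t,(n-1)/n))` are absolutely continuous
with `L²` derivatives `η̇ⁿ_k`, and
`∫₀ᵀ Σ_k (η̇ⁿ_k(t))² dt ≤ C (∫₀ᵀ Σ_k (∂V/∂t(t,k/n))² dt + n)`
for a constant `C` independent of `n`. -/
theorem eta_absolutely_continuous_L2_bound
    (T : ℝ) (hT : 0 < T) (V Vt Vx Vxx : ℝ → ℝ → ℝ)
    (hVc : Continuous fun p : ℝ × ℝ => V p.1 p.2)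
    (hVt : ∀ t x, HasDerivAt (fun s => V s x) (Vt t x) t)
    (hVx : ∀ t x, HasDerivAt (fun y => V t y) (Vx t x) x)
    (hVxx : ∀ t x, HasDerivAt (fun y => Vx t y) (Vxx t x) x)
    (hVtc : Continuous fun p : ℝ × ℝ => Vt p.1 p.2)
    (hVxxc : Continuous fun p : ℝ × ℝ => Vxx p.1 p.2)
    (hVbd : ∀ t ≥ (0:ℝ), V t 0 = 0 ∧ V t 1 = 0)
    (hV0 : ∀ x ∈ Set.Icc (0:ℝ) 1, 0 ≤ V 0 x) :
    ∃ C : ℝ, ∀ n : ℕ, 2 ≤ n →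
      ∀ (Zn : ℝ → Fin (n-1) → ℝ) (ηn : Fin (n-1) → StieltjesFunction ℝ),
        IsSkorohodSolution n (fun t k => V t (((k : ℕ) + 1 : ℝ) / n)) Zn ηn →
        ∃ g : Fin (n-1) → ℝ → ℝ,
          (∀ k, IntegrableOn (g k) (Set.Icc 0 T)) ∧
          (∀ k, IntegrableOn (fun t => (g k t)^2) (Set.Icc 0 T)) ∧
          (∀ k, ∀ t ∈ Set.Icc (0:ℝ) T, ηn k t = ∫ s in (0:ℝ)..t, g k s) ∧
          (∫ t in (0:ℝ)..T, ∑ k, (g k t)^2)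
            ≤ C * ((∫ t in (0:ℝ)..T, ∑ k : Fin (n-1), (Vt t (((k : ℕ) + 1 : ℝ) / n))^2) + n) :=
  eta_absolutely_continuous_L2_bound_general T hT V Vt Vx Vxx hVt hVx hVxx hVtc hVxxc hVbd
end
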